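/- arXiv:2003.10525 — 6 statements merged into one kernel-verified Lean document; each statement's English description precedes it below -/
import Mathlib

section
/- P-almost surely, E[1_A | σ(ψ)] = ψ; that is, the joint multiple generalized propensity score is a balancing score: the conditional probability of the joint treatment event {Z = z, G = g} given the joint multiple generalized propensity score ψ equals ψ itself, P(Z = z, G = g | ψ(z,g;X)) = ψ(z,g;X) almost surely. -/
open MeasureTheory

/-- **Balancing property of the JMGPS.**
P-almost surely, the conditional probability of the joint treatment event
`{Z = z, G = g}` given the joint multiple generalized propensity score ψ
equals ψ itself. -/
theorem jmgps_balancing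
    {Ω : Type*} [MeasurableSpace Ω] (P : Measure Ω) [IsProbabilityMeasure P]
    (K P' : ℕ) (hK : 1 ≤ K) (hP' : 1 ≤ P')
    (Z : Ω → Fin K) (G : Ω → (Fin K → ℝ)) (X : Ω → (Fin P' → ℝ))
    (hZ : Measurable Z) (hG : Measurable G) (hX : Measurable X)
    (z : Fin K) (g : Fin K → ℝ)
    (A : Set Ω) (hA : A = {ω | Z ω = z ∧ G ω = g})
    (ψ : Ω → ℝ)
    (hψ : ψ = P[A.indicator (fun _ => (1 : ℝ)) | MeasurableSpace.comap X inferInstance]) :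
    P[A.indicator (fun _ => (1 : ℝ)) | MeasurableSpace.comap ψ inferInstance] =ᵐ[P] ψ := by
  rename_i m0 _inst
  set mX : MeasurableSpace Ω := MeasurableSpace.comap X inferInstance with hmX
  have hmX_le : mX ≤ m0 := hX.comap_le
  have hψ_sm : StronglyMeasurable[mX] ψ := hψ ▸ stronglyMeasurable_condExp
  have hψ_meas : Measurable[mX] ψ := hψ_sm.measurable
  set mψ : MeasurableSpace Ω := MeasurableSpace.comap ψ inferInstance with hmψ
  have hmψ_le_mX : mψ ≤ mX := hψ_meas.comap_le
  have hmψ_le : mψ ≤ m0 := hmψ_le_mX.trans hmX_le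
  have hψ_mψ : Measurable[mψ] ψ := measurable_iff_comap_le.mpr le_rfl
  have hψ_int : Integrable ψ P := hψ ▸ integrable_condExp
  have tower : P[P[A.indicator (fun _ => (1 : ℝ)) | mX] | mψ]
      =ᵐ[P] P[A.indicator (fun _ => (1 : ℝ)) | mψ] :=
    condExp_condExp_of_le hmψ_le_mX hmX_le
  have h1 : P[ψ | mψ] =ᵐ[P] ψ :=
    (condExp_of_stronglyMeasurable hmψ_le hψ_mψ.stronglyMeasurable hψ_int).symm ▸
      Filter.EventuallyEq.rfl
  calc P[A.indicator (fun _ => (1 : ℝ)) | mψ]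
      =ᵐ[P] P[ψ | mψ] := (hψ ▸ tower).symm
    _ =ᵐ[P] ψ := h1
end

section
/- Under weak unconfoundedness of the joint treatment, P-almost surely E[1_A | σ(Y) ⊔ σ(ψ)] = E[1_A | σ(ψ)]; that is, conditional on the joint multiple generalized propensity score ψ, the joint treatment event {Z = z, G = g} is unconfounded with the potential outcome Y: P(D(z) = 1, G = g | Y(z,g), ψ(z,g;X)) = P(D(z) = 1, G = g | ψ(z,g;X)) almost surely. -/
open MeasureTheory

/-- **Conditional unconfoundedness given the JMGPS.**
Under weak unconfoundedness of the joint treatment, conditioning on the joint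
multiple generalized propensity score ψ, the joint treatment event
`{Z = z, G = g}` is unconfounded with the potential outcome Y. -/
theorem jmgps_conditional_unconfoundedness
    {Ω : Type*} [MeasurableSpace Ω] (P : Measure Ω) [IsProbabilityMeasure P]
    (K P' : ℕ) (hK : 1 ≤ K) (hP' : 1 ≤ P')
    (Z : Ω → Fin K) (G : Ω → (Fin K → ℝ)) (X : Ω → (Fin P' → ℝ)) (Y : Ω → ℝ)
    (hZ : Measurable Z) (hG : Measurable G) (hX : Measurable X) (hY : Measurable Y)
    (z : Fin K) (g : Fin K → ℝ)
    (A : Set Ω) (hA : A = {ω | Z ω = z ∧ G ω = g})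
    (ψ : Ω → ℝ)
    (hψ : ψ = P[A.indicator (fun _ => (1 : ℝ)) | MeasurableSpace.comap X inferInstance])
    (hWU : P[A.indicator (fun _ => (1 : ℝ)) |
            MeasurableSpace.comap Y inferInstance ⊔ MeasurableSpace.comap X inferInstance]
          =ᵐ[P]
          P[A.indicator (fun _ => (1 : ℝ)) | MeasurableSpace.comap X inferInstance]) :
    P[A.indicator (fun _ => (1 : ℝ)) |
        MeasurableSpace.comap Y inferInstance ⊔ MeasurableSpace.comap ψ inferInstance]
      =ᵐ[P]
      P[A.indicator (fun _ => (1 : ℝ)) | MeasurableSpace.comap ψ inferInstance] := by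
  set f := A.indicator (fun _ => (1 : ℝ)) with hf
  set mX := MeasurableSpace.comap X inferInstance with hmXdef
  set mY := MeasurableSpace.comap Y inferInstance with hmYdef
  set mψ := MeasurableSpace.comap ψ inferInstance with hmψdef
  have hmX := hX.comap_le
  have hmY := hY.comap_le
  have hψSM : StronglyMeasurable[mX] ψ := hψ ▸ stronglyMeasurable_condExp
  have hmψX : mψ ≤ mX := measurable_iff_comap_le.mp hψSM.measurable
  have hmψ := hmψX.trans hmX
  have hψint : Integrable ψ P := hψ ▸ integrable_condExp
  have hψmψ : StronglyMeasurable[mψ] ψ :=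
    (measurable_iff_comap_le.mpr le_rfl).stronglyMeasurable
  -- RHS: E[f | mψ] = E[E[f|mX] | mψ] = E[ψ|mψ] = ψ
  have hR : P[f | mψ] =ᵐ[P] ψ := by
    have h1 : P[P[f | mX] | mψ] =ᵐ[P] P[f | mψ] := condExp_condExp_of_le hmψX hmX
    have h2 : P[P[f | mX] | mψ] = P[ψ | mψ] := by rw [← hψ]
    have h3 : P[ψ | mψ] =ᵐ[P] ψ := by
      rw [condExp_of_stronglyMeasurable hmψ hψmψ hψint]
    exact h1.symm.trans (h2 ▸ h3)
  -- LHS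
  have hsup : mY ⊔ mψ ≤ mY ⊔ mX := sup_le_sup_left hmψX _
  have hsup' := sup_le hmY hmX
  have hsupψ := sup_le hmY hmψ
  have hψsup : StronglyMeasurable[mY ⊔ mψ] ψ := hψmψ.mono le_sup_right
  have hL : P[f | mY ⊔ mψ] =ᵐ[P] ψ := by
    have h1 : P[P[f | mY ⊔ mX] | mY ⊔ mψ] =ᵐ[P] P[f | mY ⊔ mψ] :=
      condExp_condExp_of_le hsup hsup'
    have h2 : P[P[f | mY ⊔ mX] | mY ⊔ mψ] =ᵐ[P] P[ψ | mY ⊔ mψ] :=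
      condExp_congr_ae (hWU.trans (hψ ▸ ae_eq_refl ψ))
    have h3 : P[ψ | mY ⊔ mψ] =ᵐ[P] ψ := by
      rw [condExp_of_stronglyMeasurable hsupψ hψsup hψint]
    exact h1.symm.trans (h2.trans h3)
  exact hL.trans hR.symm
end

section
/- Under weak unconfoundedness of the joint treatment, P-almost surely E[1_A | σ(Y) ⊔ σ(ψ)] = ψ; that is, the conditional probability of the joint treatment event {Z = z, G = g} given both the potential outcome Y and the joint multiple generalized propensity score ψ equals ψ itself. -/
open MeasureTheory

/-- Under weak unconfoundedness of the joint treatment, the conditional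
probability of the joint treatment event `{Z = z, G = g}` given both the
potential outcome Y and the joint multiple generalized propensity score ψ
equals ψ itself, P-almost surely. -/
theorem jmgps_cond_prob_given_Y_and_ps_eq_ps
    {Ω : Type*} [MeasurableSpace Ω] (P : Measure Ω) [IsProbabilityMeasure P]
    (K P' : ℕ) (hK : 1 ≤ K) (hP' : 1 ≤ P')
    (Z : Ω → Fin K) (G : Ω → (Fin K → ℝ)) (X : Ω → (Fin P' → ℝ)) (Y : Ω → ℝ)
    (hZ : Measurable Z) (hG : Measurable G) (hX : Measurable X) (hY : Measurable Y)
    (z : Fin K) (g : Fin K → ℝ)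
    (A : Set Ω) (hA : A = {ω | Z ω = z ∧ G ω = g})
    (ψ : Ω → ℝ)
    (hψ : ψ = P[A.indicator (fun _ => (1 : ℝ)) | MeasurableSpace.comap X inferInstance])
    (hWU : P[A.indicator (fun _ => (1 : ℝ)) |
            MeasurableSpace.comap Y inferInstance ⊔ MeasurableSpace.comap X inferInstance]
          =ᵐ[P]
          P[A.indicator (fun _ => (1 : ℝ)) | MeasurableSpace.comap X inferInstance]) :
    P[A.indicator (fun _ => (1 : ℝ)) |
        MeasurableSpace.comap Y inferInstance ⊔ MeasurableSpace.comap ψ inferInstance]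
      =ᵐ[P] ψ := by
  set mX := MeasurableSpace.comap X inferInstance with hmX
  set mY := MeasurableSpace.comap Y inferInstance with hmY
  set mψ := MeasurableSpace.comap ψ inferInstance with hmψ
  set f := A.indicator (fun _ => (1 : ℝ)) with hf
  have hψm : StronglyMeasurable[mX] ψ := hψ ▸ stronglyMeasurable_condExp
  have hψψ : Measurable[mψ] ψ := measurable_iff_comap_le.2 le_rfl
  have hψX : mψ ≤ mX := measurable_iff_comap_le.1 hψm.measurable
  have hle : mY ⊔ mψ ≤ mY ⊔ mX := sup_le_sup_left hψX _
  have hle2 := sup_le (α := MeasurableSpace Ω) hY.comap_le hX.comap_le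
  have h1 : P[f | mY ⊔ mψ] =ᵐ[P] P[P[f | mY ⊔ mX] | mY ⊔ mψ] :=
    (condExp_condExp_of_le (μ := P) (f := f) hle hle2).symm
  have h2 : P[P[f | mY ⊔ mX] | mY ⊔ mψ] =ᵐ[P] P[ψ | mY ⊔ mψ] :=
    condExp_congr_ae (hWU.trans (by rw [hψ]))
  have h3 : P[ψ | mY ⊔ mψ] =ᵐ[P] ψ := by
    exact Filter.EventuallyEq.of_eq <| condExp_of_stronglyMeasurable (μ := P) (hle.trans hle2)
      ((hψψ.mono (le_sup_right (a := mY)) le_rfl).stronglyMeasurable) (hψ ▸ integrable_condExp)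
  exact (h1.trans h2).trans h3
end

section
/- Under weak unconfoundedness of the joint treatment, and assuming the joint multiple generalized propensity score factorizes as ψ = φ·λ almost surely, where φ is the individual propensity score and λ is a σ(X)-measurable version of the neighborhood propensity score, one has P-almost surely E[1_A | σ(Y) ⊔ σ(φ) ⊔ σ(λ)] = E[1_A | σ(φ) ⊔ σ(λ)]; that is, conditioning separately on the individual and the neighborhood propensity scores still guarantees conditional unconfoundedness of the joint treatment event {Z = z, G = g} with respect to the potential outcome Y. -/
open MeasureTheory

/-- **Conditional unconfoundedness given the individual and neighborhood
propensity scores.** Under weak unconfoundedness of the joint treatment and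
the factorization ψ = φ·λ (a.s.), conditioning separately on the individual
propensity score φ and the neighborhood propensity score λ still guarantees
conditional unconfoundedness of the joint treatment event `{Z = z, G = g}`
with respect to the potential outcome Y. -/
theorem jmgps_conditional_unconfoundedness_factored
    {Ω : Type*} [MeasurableSpace Ω] (P : Measure Ω) [IsProbabilityMeasure P]
    (K P' : ℕ) (hK : 1 ≤ K) (hP' : 1 ≤ P')
    (Z : Ω → Fin K) (G : Ω → (Fin K → ℝ)) (X : Ω → (Fin P' → ℝ)) (Y : Ω → ℝ)
    (hZ : Measurable Z) (hG : Measurable G) (hX : Measurable X) (hY : Measurable Y)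
    (z : Fin K) (g : Fin K → ℝ)
    (A B : Set Ω) (hA : A = {ω | Z ω = z ∧ G ω = g}) (hB : B = {ω | Z ω = z})
    (ψ φ lam : Ω → ℝ)
    (hψ : ψ = P[A.indicator (fun _ => (1 : ℝ)) | MeasurableSpace.comap X inferInstance])
    (hφ : φ = P[B.indicator (fun _ => (1 : ℝ)) | MeasurableSpace.comap X inferInstance])
    (hlam : Measurable[MeasurableSpace.comap X inferInstance] lam)
    (hfact : ψ =ᵐ[P] φ * lam)
    (hWU : P[A.indicator (fun _ => (1 : ℝ)) |
            MeasurableSpace.comap Y inferInstance ⊔ MeasurableSpace.comap X inferInstance]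
          =ᵐ[P]
          P[A.indicator (fun _ => (1 : ℝ)) | MeasurableSpace.comap X inferInstance]) :
    P[A.indicator (fun _ => (1 : ℝ)) |
        MeasurableSpace.comap Y inferInstance ⊔ MeasurableSpace.comap φ inferInstance
          ⊔ MeasurableSpace.comap lam inferInstance]
      =ᵐ[P]
      P[A.indicator (fun _ => (1 : ℝ)) |
        MeasurableSpace.comap φ inferInstance ⊔ MeasurableSpace.comap lam inferInstance] := by
  have hmX_le0 : MeasurableSpace.comap X inferInstance ≤ ‹MeasurableSpace Ω› := hX.comap_le
  have hmY_le0 : MeasurableSpace.comap Y inferInstance ≤ ‹MeasurableSpace Ω› := hY.comap_le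
  set mX : MeasurableSpace Ω := MeasurableSpace.comap X inferInstance with hmX
  set mY : MeasurableSpace Ω := MeasurableSpace.comap Y inferInstance with hmY
  set mF : MeasurableSpace Ω := MeasurableSpace.comap φ inferInstance with hmF
  set mL : MeasurableSpace Ω := MeasurableSpace.comap lam inferInstance with hmL
  have hφ_meas : Measurable[mX] φ := by
    rw [hφ]; exact stronglyMeasurable_condExp.measurable
  have hmF_le : mF ≤ mX := hφ_meas.comap_le
  have hmL_le : mL ≤ mX := hlam.comap_le
  have hF_le : mF ⊔ mL ≤ mX := sup_le hmF_le hmL_le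
  have hF_le0 := hF_le.trans hmX_le0
  have hG_le : mY ⊔ mF ⊔ mL ≤ mY ⊔ mX := by
    rw [sup_assoc]
    exact sup_le_sup_left (sup_le hmF_le hmL_le) mY
  have hYX_le := sup_le hmY_le0 hmX_le0
  have hG_le0 := hG_le.trans hYX_le
  set f : Ω → ℝ := A.indicator (fun _ => (1 : ℝ)) with hf
  have hψ_int : Integrable ψ P := by rw [hψ]; exact integrable_condExp
  have hfl_int : Integrable (φ * lam) P := hψ_int.congr hfact
  have hfl_meas : StronglyMeasurable[mF ⊔ mL] (φ * lam) := by
    refine StronglyMeasurable.mul ?_ ?_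
    · exact (measurable_iff_comap_le.2 (le_sup_left : mF ≤ mF ⊔ mL)).stronglyMeasurable
    · exact (measurable_iff_comap_le.2 (le_sup_right : mL ≤ mF ⊔ mL)).stronglyMeasurable
  have hL : P[f | mY ⊔ mF ⊔ mL] =ᵐ[P] φ * lam := by
    have h1 : P[f | mY ⊔ mF ⊔ mL] =ᵐ[P] P[P[f | mY ⊔ mX] | mY ⊔ mF ⊔ mL] :=
      (condExp_condExp_of_le hG_le hYX_le).symm
    have h2 : P[P[f | mY ⊔ mX] | mY ⊔ mF ⊔ mL] =ᵐ[P] P[φ * lam | mY ⊔ mF ⊔ mL] :=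
      condExp_congr_ae (hWU.trans (hψ ▸ hfact))
    have h3 : P[φ * lam | mY ⊔ mF ⊔ mL] = φ * lam :=
      condExp_of_stronglyMeasurable hG_le0
        (hfl_meas.mono (by rw [sup_assoc]; exact le_sup_right)) hfl_int
    exact (h1.trans h2).trans (by rw [h3])
  have hR : P[f | mF ⊔ mL] =ᵐ[P] φ * lam := by
    have h1 : P[f | mF ⊔ mL] =ᵐ[P] P[P[f | mX] | mF ⊔ mL] :=
      (condExp_condExp_of_le hF_le hmX_le0).symm
    have h2 : P[P[f | mX] | mF ⊔ mL] =ᵐ[P] P[φ * lam | mF ⊔ mL] :=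
      condExp_congr_ae (hψ ▸ hfact)
    have h3 : P[φ * lam | mF ⊔ mL] = φ * lam :=
      condExp_of_stronglyMeasurable hF_le0 hfl_meas hfl_int
    exact (h1.trans h2).trans (by rw [h3])
  exact hL.trans hR.symm
end

section
/- Under weak unconfoundedness of the joint treatment, and assuming the joint multiple generalized propensity score factorizes as ψ = φ·λ almost surely, where φ is the individual propensity score and λ is a σ(X)-measurable version of the neighborhood propensity score, one has P-almost surely E[1_A | σ(Y) ⊔ σ(φ) ⊔ σ(λ)] = ψ; that is, the conditional probability of the joint treatment event {Z = z, G = g} given the potential outcome Y together with the individual and neighborhood propensity scores equals the joint multiple generalized propensity score. -/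
open MeasureTheory

/-- Under weak unconfoundedness of the joint treatment and the factorization
ψ = φ·λ (a.s.), the conditional probability of the joint treatment event
`{Z = z, G = g}` given the potential outcome Y together with the individual
and neighborhood propensity scores equals the joint multiple generalized
propensity score ψ, P-a.s. -/
theorem jmgps_cond_prob_given_Y_and_factored_ps_eq_jmgps
    {Ω : Type*} [MeasurableSpace Ω] (P : Measure Ω) [IsProbabilityMeasure P]
    (K P' : ℕ) (hK : 1 ≤ K) (hP' : 1 ≤ P')
    (Z : Ω → Fin K) (G : Ω → (Fin K → ℝ)) (X : Ω → (Fin P' → ℝ)) (Y : Ω → ℝ)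
    (hZ : Measurable Z) (hG : Measurable G) (hX : Measurable X) (hY : Measurable Y)
    (z : Fin K) (g : Fin K → ℝ)
    (A B : Set Ω) (hA : A = {ω | Z ω = z ∧ G ω = g}) (hB : B = {ω | Z ω = z})
    (ψ φ lam : Ω → ℝ)
    (hψ : ψ = P[A.indicator (fun _ => (1 : ℝ)) | MeasurableSpace.comap X inferInstance])
    (hφ : φ = P[B.indicator (fun _ => (1 : ℝ)) | MeasurableSpace.comap X inferInstance])
    (hlam : Measurable[MeasurableSpace.comap X inferInstance] lam)
    (hfact : ψ =ᵐ[P] φ * lam)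
    (hWU : P[A.indicator (fun _ => (1 : ℝ)) |
            MeasurableSpace.comap Y inferInstance ⊔ MeasurableSpace.comap X inferInstance]
          =ᵐ[P]
          P[A.indicator (fun _ => (1 : ℝ)) | MeasurableSpace.comap X inferInstance]) :
    P[A.indicator (fun _ => (1 : ℝ)) |
        MeasurableSpace.comap Y inferInstance ⊔ MeasurableSpace.comap φ inferInstance
          ⊔ MeasurableSpace.comap lam inferInstance]
      =ᵐ[P] ψ := by
  rename_i m0 hPr
  set mX := MeasurableSpace.comap X inferInstance with hmX
  set mY := MeasurableSpace.comap Y inferInstance with hmY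
  set m := mY ⊔ MeasurableSpace.comap φ inferInstance ⊔ MeasurableSpace.comap lam inferInstance
    with hm
  have hmX_le : mX ≤ m0 := hX.comap_le
  have hmY_le : mY ≤ m0 := hY.comap_le
  have hm2_le : mY ⊔ mX ≤ m0 := sup_le hmY_le hmX_le
  have hφ_meas : Measurable[mX] φ := by
    rw [hφ]; exact stronglyMeasurable_condExp.measurable
  have hφ_comap : MeasurableSpace.comap φ inferInstance ≤ mX := by
    rw [← measurable_iff_comap_le]; exact hφ_meas
  have hlam_comap : MeasurableSpace.comap lam inferInstance ≤ mX := by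
    rw [← measurable_iff_comap_le]; exact hlam
  have hm_le2 : m ≤ mY ⊔ mX := by
    apply sup_le (sup_le le_sup_left (hφ_comap.trans le_sup_right))
      (hlam_comap.trans le_sup_right)
  have hm_le : m ≤ m0 := hm_le2.trans hm2_le
  have hφm : Measurable[m] φ := by
    rw [measurable_iff_comap_le]; exact le_trans le_sup_right le_sup_left
  have hlamm : Measurable[m] lam := by
    rw [measurable_iff_comap_le]; exact le_sup_right
  have hint_ψ : Integrable ψ P := by rw [hψ]; exact integrable_condExp
  have hint : Integrable (φ * lam) P := hint_ψ.congr hfact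
  have h1 : P[A.indicator (fun _ => (1 : ℝ)) | m]
      =ᵐ[P] P[P[A.indicator (fun _ => (1 : ℝ)) | mY ⊔ mX] | m] :=
    (condExp_condExp_of_le hm_le2 hm2_le).symm
  have h2 : P[P[A.indicator (fun _ => (1 : ℝ)) | mY ⊔ mX] | m] =ᵐ[P] P[φ * lam | m] :=
    condExp_congr_ae (hWU.trans (hψ ▸ hfact))
  have h3 : P[φ * lam | m] = φ * lam :=
    condExp_of_stronglyMeasurable hm_le
      ((hφm.mul hlamm).stronglyMeasurable) hint
  exact ((h1.trans h2).trans (by rw [h3])).trans hfact.symm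
end

section
/- Under weak unconfoundedness of the joint treatment, let 𝔅 be any sub-σ-algebra with σ(ψ) ⊆ 𝔅 ⊆ σ(X) (equivalently: 𝔅 ⊆ σ(X) and ψ is 𝔅-measurable). Then P-almost surely E[1_A | σ(Y) ⊔ 𝔅] = ψ, and consequently E[1_A | σ(Y) ⊔ 𝔅] = E[1_A | 𝔅] almost surely; that is, conditioning on any such coarsening of the covariate information that determines the joint multiple generalized propensity score preserves conditional unconfoundedness of the joint treatment event with respect to the potential outcome. -/
open MeasureTheory

/-- Under weak unconfoundedness of the joint treatment, for any sub-σ-algebra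
𝔅 with σ(ψ) ⊆ 𝔅 ⊆ σ(X), one has P-a.s. E[1_A | σ(Y) ⊔ 𝔅] = ψ and consequently
E[1_A | σ(Y) ⊔ 𝔅] = E[1_A | 𝔅] a.s.: conditioning on any such coarsening of the
covariate information that determines the joint multiple generalized propensity
score preserves conditional unconfoundedness. -/
theorem jmgps_unconfoundedness_coarsening
    {Ω : Type*} [m : MeasurableSpace Ω] (P : Measure Ω) [IsProbabilityMeasure P]
    (K P' : ℕ) (hK : 1 ≤ K) (hP' : 1 ≤ P')
    (Z : Ω → Fin K) (G : Ω → (Fin K → ℝ)) (X : Ω → (Fin P' → ℝ)) (Y : Ω → ℝ)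
    (hZ : Measurable Z) (hG : Measurable G) (hX : Measurable X) (hY : Measurable Y)
    (z : Fin K) (g : Fin K → ℝ)
    (A : Set Ω) (hA : A = {ω | Z ω = z ∧ G ω = g})
    (ψ : Ω → ℝ)
    (hψ : ψ = P[A.indicator (fun _ => (1 : ℝ)) | MeasurableSpace.comap X inferInstance])
    (𝔅 : MeasurableSpace Ω)
    (h1 : MeasurableSpace.comap ψ inferInstance ≤ 𝔅)
    (h2 : 𝔅 ≤ MeasurableSpace.comap X inferInstance)
    (hWU : P[A.indicator (fun _ => (1 : ℝ)) |
            MeasurableSpace.comap Y inferInstance ⊔ MeasurableSpace.comap X inferInstance]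
          =ᵐ[P]
          P[A.indicator (fun _ => (1 : ℝ)) | MeasurableSpace.comap X inferInstance]) :
    P[A.indicator (fun _ => (1 : ℝ)) | MeasurableSpace.comap Y inferInstance ⊔ 𝔅] =ᵐ[P] ψ
    ∧ P[A.indicator (fun _ => (1 : ℝ)) | MeasurableSpace.comap Y inferInstance ⊔ 𝔅]
        =ᵐ[P]
      P[A.indicator (fun _ => (1 : ℝ)) | 𝔅] := by
  set f : Ω → ℝ := A.indicator (fun _ => (1 : ℝ)) with hf
  have hmX : MeasurableSpace.comap X inferInstance ≤ m := hX.comap_le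
  have hmY : MeasurableSpace.comap Y inferInstance ≤ m := hY.comap_le
  have h𝔅m : 𝔅 ≤ m := h2.trans hmX
  have hYB : MeasurableSpace.comap Y inferInstance ⊔ 𝔅 ≤ m := sup_le hmY h𝔅m
  have hle : MeasurableSpace.comap Y inferInstance ⊔ 𝔅 ≤
      MeasurableSpace.comap Y inferInstance ⊔ MeasurableSpace.comap X inferInstance :=
    sup_le_sup_left h2 _
  have hψint : Integrable ψ P := by rw [hψ]; exact integrable_condExp
  have hψmeas : StronglyMeasurable[𝔅] ψ := by
    exact (Measurable.of_comap_le h1).stronglyMeasurable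
  -- first: E[f | σY ⊔ 𝔅] = ψ a.s.
  have key : P[f | MeasurableSpace.comap Y inferInstance ⊔ 𝔅] =ᵐ[P] ψ := by
    have h3 : P[P[f | MeasurableSpace.comap Y inferInstance ⊔
        MeasurableSpace.comap X inferInstance] |
        MeasurableSpace.comap Y inferInstance ⊔ 𝔅]
        =ᵐ[P] P[f | MeasurableSpace.comap Y inferInstance ⊔ 𝔅] :=
      condExp_condExp_of_le hle (sup_le hmY hmX)
    have h4 : P[P[f | MeasurableSpace.comap Y inferInstance ⊔
        MeasurableSpace.comap X inferInstance] |
        MeasurableSpace.comap Y inferInstance ⊔ 𝔅]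
        =ᵐ[P] P[ψ | MeasurableSpace.comap Y inferInstance ⊔ 𝔅] := by
      refine condExp_congr_ae ?_
      rw [hψ]; exact hWU
    have h5 : P[ψ | MeasurableSpace.comap Y inferInstance ⊔ 𝔅] = ψ :=
      condExp_of_stronglyMeasurable hYB (hψmeas.mono (le_sup_right)) hψint
    rw [h5] at h4
    exact h3.symm.trans h4
  refine ⟨key, ?_⟩
  have key2 : P[f | 𝔅] =ᵐ[P] ψ := by
    have h3 : P[P[f | MeasurableSpace.comap X inferInstance] | 𝔅] =ᵐ[P] P[f | 𝔅] :=
      condExp_condExp_of_le h2 hmX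
    have h4 : P[P[f | MeasurableSpace.comap X inferInstance] | 𝔅] = ψ := by
      rw [← hψ]
      exact condExp_of_stronglyMeasurable h𝔅m hψmeas hψint
    rw [h4] at h3
    exact h3.symm
  exact key.trans key2.symm
end
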